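/- arXiv:2103.14166 — 2 statements merged into one kernel-verified Lean document; each statement's English description precedes it below -/
import Mathlib

section
/- Let A ∈ ℝ^{3×3} with singular value decomposition A = U S Vᵀ where U, V ∈ O(3) and S = diag(s₁,s₂,s₃) with s₁ ≥ s₂ ≥ s₃ ≥ 0 and s₂ + s₃ det(UV) ≥ 0. Then R* = U diag(1, 1, det(UV)) Vᵀ maximizes tr(Aᵀ R) over R ∈ SO(3), and hence minimizes f(R) = (1/2)‖A − R‖²_F over SO(3). -/
/-!
Write `W = Uᵀ R V`, which is orthogonal with `det W = det (U V)`, so that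
`tr (Aᵀ R) = s₀ W₀₀ + s₁ W₁₁ + s₂ W₂₂`. By summation by parts this is
`(s₀ - s₁) W₀₀ + (s₁ - s₂) (W₀₀ + W₁₁) + s₂ tr W`, with nonnegative coefficients.
Orthogonality bounds the diagonal entries by `1`, and for a 3×3 orthogonal matrix
`tr W ≤ 2 + det W`: for a rotation `Q` one has `(1 + tr Q) (3 - tr Q) = ‖Q - Qᵀ‖²_F / 2 ≥ 0`,
so `tr Q ≥ -1`, and an improper `W` is `-Q` for a rotation `Q`. All three bounds are
attained at `W = diag (1, 1, det (U V))`, which is `R*`.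
-/

open Matrix

namespace Matrix

section CommRing

variable {n R : Type*} [Fintype n] [DecidableEq n] [CommRing R]

lemma transpose_mul_self_mul_eq_one {U W : Matrix n n R} (hU : Uᵀ * U = 1) (hW : Wᵀ * W = 1) :
    (U * W)ᵀ * (U * W) = 1 := by
  rw [transpose_mul, Matrix.mul_assoc, ← Matrix.mul_assoc Uᵀ, hU, Matrix.one_mul, hW]

lemma transpose_transpose_mul_transpose_eq_one {U : Matrix n n R} (hU : Uᵀ * U = 1) :
    Uᵀᵀ * Uᵀ = 1 := by
  rw [transpose_transpose, mul_eq_one_comm.mp hU]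

lemma det_sq_eq_one_of_transpose_mul_self {U : Matrix n n R} (hU : Uᵀ * U = 1) :
    U.det ^ 2 = 1 := by
  simpa only [det_mul, det_transpose, det_one, sq] using congrArg det hU

lemma diagonal_transpose_mul_self {d : n → R} (hd : ∀ i, d i ^ 2 = 1) :
    (diagonal d)ᵀ * diagonal d = 1 := by
  rw [diagonal_transpose, diagonal_mul_diagonal, ← diagonal_one]
  exact congrArg diagonal (funext fun i => by rw [← sq, hd])

lemma adjugate_eq_transpose {Q : Matrix n n R} (hQ : Qᵀ * Q = 1) (hdet : Q.det = 1) :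
    Q.adjugate = Qᵀ :=
  calc Q.adjugate = Qᵀ * Q * Q.adjugate := by rw [hQ, Matrix.one_mul]
    _ = Qᵀ := by rw [Matrix.mul_assoc, mul_adjugate, hdet, one_smul, Matrix.mul_one]

lemma trace_diagonal_mul (s : n → R) (M : Matrix n n R) :
    (diagonal s * M).trace = ∑ i, s i * M i i := by
  simp only [trace, diag_apply, diagonal_mul]

lemma trace_transpose_mul_of_eq_mul_diagonal_mul {A U V : Matrix n n R} {s : n → R}
    (hA : A = U * diagonal s * Vᵀ) (M : Matrix n n R) :
    (Aᵀ * M).trace = ∑ i, s i * (Uᵀ * M * V) i i := by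
  rw [← trace_diagonal_mul, hA]
  simp only [transpose_mul, transpose_transpose, diagonal_transpose, Matrix.mul_assoc]
  rw [trace_mul_comm V]
  simp only [Matrix.mul_assoc]

lemma trace_sub_transpose_mul_sub {A Q : Matrix n n R} (hQ : Qᵀ * Q = 1) :
    ((A - Q)ᵀ * (A - Q)).trace = (Aᵀ * A).trace - 2 * (Aᵀ * Q).trace + Fintype.card n := by
  have hQA : (Qᵀ * A).trace = (Aᵀ * Q).trace := by
    rw [← trace_transpose, transpose_mul, transpose_transpose]
  rw [transpose_sub, sub_mul, mul_sub, mul_sub, hQ, trace_sub, trace_sub, trace_sub, trace_one,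
    hQA]
  ring

lemma one_add_trace_mul_three_sub_trace {Q : Matrix (Fin 3) (Fin 3) R} (hQ : Qᵀ * Q = 1)
    (hdet : Q.det = 1) :
    (1 + Q.trace) * (3 - Q.trace) =
      (Q 2 1 - Q 1 2) ^ 2 + (Q 0 2 - Q 2 0) ^ 2 + (Q 1 0 - Q 0 1) ^ 2 := by
  have hadj := adjugate_eq_transpose hQ hdet
  have c0 := congrFun (congrFun hadj 0) 0
  have c1 := congrFun (congrFun hadj 1) 1
  have c2 := congrFun (congrFun hadj 2) 2
  have e0 := congrFun (congrFun hQ 0) 0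
  have e1 := congrFun (congrFun hQ 1) 1
  have e2 := congrFun (congrFun hQ 2) 2
  simp only [Fin.isValue, adjugate_fin_three, of_apply, cons_val', cons_val_zero, cons_val_fin_one,
    transpose_apply, cons_val_one, cons_val] at c0 c1 c2
  simp only [mul_apply, transpose_apply, Fin.sum_univ_three, one_apply_eq] at e0 e1 e2
  rw [trace_fin_three]
  linear_combination -(e0 + e1 + e2) - 2 * (c0 + c1 + c2)

end CommRing

section OrderedRing

variable {n R : Type*} [Fintype n] [DecidableEq n] [CommRing R] [LinearOrder R]
  [IsStrictOrderedRing R]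

lemma apply_self_le_one_of_transpose_mul_self {W : Matrix n n R} (hW : Wᵀ * W = 1) (i : n) :
    W i i ≤ 1 := by
  have hcol : ∑ k, W k i ^ 2 = 1 := by
    simpa only [sq, mul_apply, transpose_apply, one_apply_eq] using congrFun (congrFun hW i) i
  have hsq : W i i ^ 2 ≤ 1 :=
    hcol ▸ Finset.single_le_sum (fun k _ => sq_nonneg (W k i)) (Finset.mem_univ i)
  exact (abs_le.mp ((sq_le_one_iff_abs_le_one _).mp hsq)).2

lemma neg_one_le_trace_of_det_eq_one {Q : Matrix (Fin 3) (Fin 3) R} (hQ : Qᵀ * Q = 1)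
    (hdet : Q.det = 1) : -1 ≤ Q.trace := by
  have hle : Q.trace ≤ 3 := by
    rw [trace_fin_three]
    linarith [apply_self_le_one_of_transpose_mul_self hQ 0,
      apply_self_le_one_of_transpose_mul_self hQ 1, apply_self_le_one_of_transpose_mul_self hQ 2]
  nlinarith [one_add_trace_mul_three_sub_trace hQ hdet, sq_nonneg (Q 2 1 - Q 1 2),
    sq_nonneg (Q 0 2 - Q 2 0), sq_nonneg (Q 1 0 - Q 0 1)]

lemma trace_le_two_add_det {W : Matrix (Fin 3) (Fin 3) R} (hW : Wᵀ * W = 1) :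
    W.trace ≤ 2 + W.det := by
  rcases sq_eq_one_iff.mp (det_sq_eq_one_of_transpose_mul_self hW) with hdet | hdet
  · rw [hdet, trace_fin_three]
    linarith [apply_self_le_one_of_transpose_mul_self hW 0,
      apply_self_le_one_of_transpose_mul_self hW 1, apply_self_le_one_of_transpose_mul_self hW 2]
  · have hQ : (-W)ᵀ * (-W) = 1 := by rwa [transpose_neg, neg_mul_neg]
    have hQdet : (-W).det = 1 := by
      rw [det_neg, hdet, Fintype.card_fin]
      norm_num
    have := neg_one_le_trace_of_det_eq_one hQ hQdet
    rw [trace_neg] at this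
    linarith

lemma sum_mul_diag_le_of_transpose_mul_self {W : Matrix (Fin 3) (Fin 3) R} (hW : Wᵀ * W = 1)
    {s : Fin 3 → R} (h01 : s 1 ≤ s 0) (h12 : s 2 ≤ s 1) (h2 : 0 ≤ s 2) :
    ∑ i, s i * W i i ≤ s 0 + s 1 + s 2 * W.det := by
  have h0 := apply_self_le_one_of_transpose_mul_self hW 0
  have h1 := apply_self_le_one_of_transpose_mul_self hW 1
  calc ∑ i, s i * W i i
      = (s 0 - s 1) * W 0 0 + (s 1 - s 2) * (W 0 0 + W 1 1) + s 2 * W.trace := by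
        rw [Fin.sum_univ_three, trace_fin_three]
        ring
    _ ≤ (s 0 - s 1) * 1 + (s 1 - s 2) * (1 + 1) + s 2 * (2 + W.det) :=
        add_le_add_three (mul_le_mul_of_nonneg_left h0 (sub_nonneg.2 h01))
          (mul_le_mul_of_nonneg_left (add_le_add h0 h1) (sub_nonneg.2 h12))
          (mul_le_mul_of_nonneg_left (trace_le_two_add_det hW) h2)
    _ = s 0 + s 1 + s 2 * W.det := by ring

end OrderedRing

end Matrix

theorem wahba_solution_general
    (A U V : Matrix (Fin 3) (Fin 3) ℝ) (s : Fin 3 → ℝ)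
    (hU : Uᵀ * U = 1) (hV : Vᵀ * V = 1)
    (hA : A = U * Matrix.diagonal s * Vᵀ)
    (hs01 : s 1 ≤ s 0) (hs12 : s 2 ≤ s 1) (hs2 : 0 ≤ s 2) :
    ∀ R : Matrix (Fin 3) (Fin 3) ℝ, Rᵀ * R = 1 → R.det = 1 →
      Matrix.trace (Aᵀ * R) ≤
        Matrix.trace (Aᵀ * (U * Matrix.diagonal ![1, 1, (U * V).det] * Vᵀ)) ∧
      (1 / 2 : ℝ) * Matrix.trace ((A - U * Matrix.diagonal ![1, 1, (U * V).det] * Vᵀ)ᵀ *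
          (A - U * Matrix.diagonal ![1, 1, (U * V).det] * Vᵀ)) ≤
        (1 / 2 : ℝ) * Matrix.trace ((A - R)ᵀ * (A - R)) := by
  intro R hR hRdet
  set D := Matrix.diagonal ![1, 1, (U * V).det] with hD_def
  have hD : Dᵀ * D = 1 := diagonal_transpose_mul_self fun i => by
    fin_cases i
    · simp
    · simp
    · simpa using det_sq_eq_one_of_transpose_mul_self (transpose_mul_self_mul_eq_one hU hV)
  have hVt := transpose_transpose_mul_transpose_eq_one hV
  have hRstar := transpose_mul_self_mul_eq_one (transpose_mul_self_mul_eq_one hU hD) hVt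
  have hW := transpose_mul_self_mul_eq_one
    (transpose_mul_self_mul_eq_one (transpose_transpose_mul_transpose_eq_one hU) hR) hV
  have hWdet : (Uᵀ * R * V).det = (U * V).det := by
    rw [det_mul, det_mul, det_mul, det_transpose, hRdet, mul_one]
  have hWstar : Uᵀ * (U * D * Vᵀ) * V = D := by
    rw [← Matrix.mul_assoc, ← Matrix.mul_assoc, hU, Matrix.one_mul, Matrix.mul_assoc, hV,
      Matrix.mul_one]
  have hmax : (Aᵀ * R).trace ≤ (Aᵀ * (U * D * Vᵀ)).trace := by
    rw [trace_transpose_mul_of_eq_mul_diagonal_mul hA,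
      trace_transpose_mul_of_eq_mul_diagonal_mul hA, hWstar]
    simpa [hD_def, Fin.sum_univ_three, hWdet] using
      sum_mul_diag_le_of_transpose_mul_self hW hs01 hs12 hs2
  refine ⟨hmax, ?_⟩
  rw [trace_sub_transpose_mul_sub hRstar, trace_sub_transpose_mul_sub hR]
  linarith

/-- solution of Wahba's problem. Given an SVD `A = U S Vᵀ` with
`s₁ ≥ s₂ ≥ s₃ ≥ 0` and `s₂ + s₃ det(UV) ≥ 0`, the matrix
`R* = U diag(1,1,det(UV)) Vᵀ` maximizes `tr(Aᵀ R)` over `SO(3)` and hence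
minimizes `f(R) = (1/2)‖A − R‖²_F` over `SO(3)`. -/
theorem wahba_solution
    (A U V : Matrix (Fin 3) (Fin 3) ℝ) (s : Fin 3 → ℝ)
    (hU : Uᵀ * U = 1) (hV : Vᵀ * V = 1)
    (hA : A = U * Matrix.diagonal s * Vᵀ)
    (hs01 : s 1 ≤ s 0) (hs12 : s 2 ≤ s 1) (hs2 : 0 ≤ s 2)
    (hstab : 0 ≤ s 1 + s 2 * (U * V).det) :
    ∀ R : Matrix (Fin 3) (Fin 3) ℝ, Rᵀ * R = 1 → R.det = 1 →
      Matrix.trace (Aᵀ * R) ≤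
        Matrix.trace (Aᵀ * (U * Matrix.diagonal ![1, 1, (U * V).det] * Vᵀ)) ∧
      (1 / 2 : ℝ) * Matrix.trace ((A - U * Matrix.diagonal ![1, 1, (U * V).det] * Vᵀ)ᵀ *
          (A - U * Matrix.diagonal ![1, 1, (U * V).det] * Vᵀ)) ≤
        (1 / 2 : ℝ) * Matrix.trace ((A - R)ᵀ * (A - R)) :=
  wahba_solution_general A U V s hU hV hA hs01 hs12 hs2
end

section
/- Let L_d : ℝ × ℝ × ℝⁿ × ℝⁿ → ℝ be a differentiable discrete Lagrangian and define the discrete action sum 𝔊_d = Σ_{k=0}^{N−1} L_d(t_k, t_{k+1}, x_k, x_{k+1}). If the sequence {(t_k, x_k)}_{k=0}^{N} extremizes 𝔊_d with fixed endpoints (t₀, x₀) and (t_N, x_N), then for all 1 ≤ k ≤ N−1: D₃ L_d(t_k, t_{k+1}, x_k, x_{k+1}) + D₄ L_d(t_{k−1}, t_k, x_{k−1}, x_k) = 0 and D₁ L_d(t_k, t_{k+1}, x_k, x_{k+1}) + D₂ L_d(t_{k−1}, t_k, x_{k−1}, x_k) = 0. -/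
open Finset

section MyAux

open InnerProductSpace

variable {E : Type*} [NormedAddCommGroup E] [InnerProductSpace ℝ E]

lemma myAux_hasDerivAt (L : ℝ × ℝ × E × E → ℝ) (hL : Differentiable ℝ L)
    (a b : ℝ) (u w : E) (da db : ℝ) (du dw : E) :
    HasDerivAt (fun s : ℝ => L (a + s * da, b + s * db, u + s • du, w + s • dw))
      (fderiv ℝ L (a, b, u, w) (da, db, du, dw)) 0 := by
  have h1 : HasDerivAt (fun s : ℝ => a + s * da) da 0 := by
    simpa using ((hasDerivAt_id (0:ℝ)).mul_const da).const_add a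
  have h2 : HasDerivAt (fun s : ℝ => b + s * db) db 0 := by
    simpa using ((hasDerivAt_id (0:ℝ)).mul_const db).const_add b
  have h3 : HasDerivAt (fun s : ℝ => u + s • du) du 0 := by
    simpa using ((hasDerivAt_id (0:ℝ)).smul_const du).const_add u
  have h4 : HasDerivAt (fun s : ℝ => w + s • dw) dw 0 := by
    simpa using ((hasDerivAt_id (0:ℝ)).smul_const dw).const_add w
  have hc : HasDerivAt (fun s : ℝ =>
      ((a + s * da, b + s * db, u + s • du, w + s • dw) : ℝ × ℝ × E × E))
      ((da, db, du, dw)) 0 := h1.prodMk (h2.prodMk (h3.prodMk h4))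
  have hF := (hL ((a, b, u, w) : ℝ × ℝ × E × E)).hasFDerivAt
  exact HasFDerivAt.comp_hasDerivAt 0 (by simpa using hF) hc

lemma myAux_grad3 [CompleteSpace E] (L : ℝ × ℝ × E × E → ℝ) (hL : Differentiable ℝ L)
    (a b : ℝ) (u w : E) (v : E) :
    (inner ℝ (gradient (fun y => L (a, b, y, w)) u) v : ℝ)
      = fderiv ℝ L (a, b, u, w) ((0:ℝ), (0:ℝ), v, (0:E)) := by
  have he : HasFDerivAt (fun y : E => ((a, b, y, w) : ℝ × ℝ × E × E))
      ((0 : E →L[ℝ] ℝ).prod ((0 : E →L[ℝ] ℝ).prod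
        ((ContinuousLinearMap.id ℝ E).prod (0 : E →L[ℝ] E)))) u :=
    (hasFDerivAt_const a u).prodMk ((hasFDerivAt_const b u).prodMk
      ((hasFDerivAt_id u).prodMk (hasFDerivAt_const w u)))
  have hg := ((hL ((a, b, u, w) : ℝ × ℝ × E × E)).hasFDerivAt.comp u he).hasGradientAt
  simp only [Function.comp_def] at hg
  rw [hg.gradient, toDual_symm_apply]
  rfl

lemma myAux_grad4 [CompleteSpace E] (L : ℝ × ℝ × E × E → ℝ) (hL : Differentiable ℝ L)
    (a b : ℝ) (u w : E) (v : E) :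
    (inner ℝ (gradient (fun y => L (a, b, u, y)) w) v : ℝ)
      = fderiv ℝ L (a, b, u, w) ((0:ℝ), (0:ℝ), (0:E), v) := by
  have he : HasFDerivAt (fun y : E => ((a, b, u, y) : ℝ × ℝ × E × E))
      ((0 : E →L[ℝ] ℝ).prod ((0 : E →L[ℝ] ℝ).prod
        ((0 : E →L[ℝ] E).prod (ContinuousLinearMap.id ℝ E)))) w :=
    (hasFDerivAt_const a w).prodMk ((hasFDerivAt_const b w).prodMk
      ((hasFDerivAt_const u w).prodMk (hasFDerivAt_id w)))
  have hg := ((hL ((a, b, u, w) : ℝ × ℝ × E × E)).hasFDerivAt.comp w he).hasGradientAt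
  simp only [Function.comp_def] at hg
  rw [hg.gradient, toDual_symm_apply]
  rfl

lemma myAux_d1 (L : ℝ × ℝ × E × E → ℝ) (hL : Differentiable ℝ L)
    (a b : ℝ) (u w : E) :
    deriv (fun s => L (s, b, u, w)) a
      = fderiv ℝ L (a, b, u, w) ((1:ℝ), (0:ℝ), (0:E), (0:E)) := by
  have he : HasDerivAt (fun s : ℝ => ((s, b, u, w) : ℝ × ℝ × E × E))
      (((1:ℝ), (0:ℝ), (0:E), (0:E))) a :=
    (hasDerivAt_id a).prodMk ((hasDerivAt_const a b).prodMk
      ((hasDerivAt_const a u).prodMk (hasDerivAt_const a w)))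
  exact ((hL ((a, b, u, w) : ℝ × ℝ × E × E)).hasFDerivAt.comp_hasDerivAt a he).deriv

lemma myAux_d2 (L : ℝ × ℝ × E × E → ℝ) (hL : Differentiable ℝ L)
    (a b : ℝ) (u w : E) :
    deriv (fun s => L (a, s, u, w)) b
      = fderiv ℝ L (a, b, u, w) ((0:ℝ), (1:ℝ), (0:E), (0:E)) := by
  have he : HasDerivAt (fun s : ℝ => ((a, s, u, w) : ℝ × ℝ × E × E))
      (((0:ℝ), (1:ℝ), (0:E), (0:E))) b :=
    (hasDerivAt_const b a).prodMk ((hasDerivAt_id b).prodMk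
      ((hasDerivAt_const b u).prodMk (hasDerivAt_const b w)))
  exact ((hL ((a, b, u, w) : ℝ × ℝ × E × E)).hasFDerivAt.comp_hasDerivAt b he).deriv

end MyAux

/-- extended discrete Euler–Lagrange equations. If the discrete
path `{(t_k,x_k)}` extremizes the discrete action sum
`𝔊_d = Σ L_d(t_k,t_{k+1},x_k,x_{k+1})` with fixed endpoints (i.e. the first
variation vanishes for all variations vanishing at the endpoints), then for
`1 ≤ k ≤ N−1` both the spatial and the temporal discrete Euler–Lagrange
equations hold. -/
theorem extended_discrete_euler_lagrange {n : ℕ} (N : ℕ) (hN : 1 ≤ N)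
    (Ld : ℝ → ℝ → EuclideanSpace ℝ (Fin n) → EuclideanSpace ℝ (Fin n) → ℝ)
    (hLd : ContDiff ℝ (⊤ : ℕ∞) (fun q : ℝ × ℝ × EuclideanSpace ℝ (Fin n) × EuclideanSpace ℝ (Fin n) =>
      Ld q.1 q.2.1 q.2.2.1 q.2.2.2))
    (t : ℕ → ℝ) (x : ℕ → EuclideanSpace ℝ (Fin n))
    (hext : ∀ (δt : ℕ → ℝ) (δx : ℕ → EuclideanSpace ℝ (Fin n)),
      δt 0 = 0 → δt N = 0 → δx 0 = 0 → δx N = 0 →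
      deriv (fun s : ℝ => ∑ k ∈ Finset.range N,
        Ld (t k + s * δt k) (t (k + 1) + s * δt (k + 1))
          (x k + s • δx k) (x (k + 1) + s • δx (k + 1))) 0 = 0) :
    ∀ k, 1 ≤ k → k ≤ N - 1 →
      gradient (fun y => Ld (t k) (t (k + 1)) y (x (k + 1))) (x k)
        + gradient (fun y => Ld (t (k - 1)) (t k) (x (k - 1)) y) (x k) = 0 ∧
      deriv (fun s => Ld s (t (k + 1)) (x k) (x (k + 1))) (t k)
        + deriv (fun s => Ld (t (k - 1)) s (x (k - 1)) (x k)) (t k) = 0 := by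
  let E := EuclideanSpace ℝ (Fin n)
  let L : ℝ × ℝ × E × E → ℝ := fun q => Ld q.1 q.2.1 q.2.2.1 q.2.2.2
  have hL : Differentiable ℝ L := hLd.differentiable (by simp)
  have key : ∀ (δt : ℕ → ℝ) (δx : ℕ → E),
      δt 0 = 0 → δt N = 0 → δx 0 = 0 → δx N = 0 →
      ∑ j ∈ Finset.range N, fderiv ℝ L (t j, t (j + 1), x j, x (j + 1))
        (δt j, δt (j + 1), δx j, δx (j + 1)) = 0 := by
    intro δt δx h1 h2 h3 h4
    have hsum : HasDerivAt (fun s : ℝ => ∑ j ∈ Finset.range N,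
        L (t j + s * δt j, t (j + 1) + s * δt (j + 1),
           x j + s • δx j, x (j + 1) + s • δx (j + 1)))
        (∑ j ∈ Finset.range N, fderiv ℝ L (t j, t (j + 1), x j, x (j + 1))
          (δt j, δt (j + 1), δx j, δx (j + 1))) 0 :=
      HasDerivAt.fun_sum fun j _ => myAux_hasDerivAt L hL (t j) (t (j + 1)) (x j) (x (j + 1))
        (δt j) (δt (j + 1)) (δx j) (δx (j + 1))
    rw [← hsum.deriv]
    exact hext δt δx h1 h2 h3 h4
  intro k hk1 hk2
  have hkN : k < N := by omega
  have hk1N : k - 1 < N := by omega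
  have hksub : k - 1 + 1 = k := by omega
  have hne : k - 1 ≠ k := by omega
  have hsub : ({k - 1, k} : Finset ℕ) ⊆ Finset.range N := by
    intro j hj
    simp only [Finset.mem_insert, Finset.mem_singleton] at hj
    rcases hj with h | h <;> simp [h, hk1N, hkN]
  constructor
  · -- spatial
    have hsp : ∀ v : E,
        fderiv ℝ L (t (k - 1), t k, x (k - 1), x k) ((0:ℝ), (0:ℝ), (0:E), v)
          + fderiv ℝ L (t k, t (k + 1), x k, x (k + 1)) ((0:ℝ), (0:ℝ), v, (0:E)) = 0 := by
      intro v
      have hkey := key (fun _ => 0) (fun j => if j = k then v else 0) rfl rfl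
        (by simp; omega) (by simp; omega)
      set f : ℕ → ℝ := fun j => fderiv ℝ L (t j, t (j + 1), x j, x (j + 1))
        ((0:ℝ), (0:ℝ), (if j = k then v else 0), (if j + 1 = k then v else 0)) with hf
      have hz : ∀ j ∈ Finset.range N, j ∉ ({k - 1, k} : Finset ℕ) → f j = 0 := by
        intro j _ hj
        simp only [Finset.mem_insert, Finset.mem_singleton, not_or] at hj
        have e1 : j ≠ k := hj.2
        have e2 : j + 1 ≠ k := by omega
        simp [hf, e1, e2]
        exact map_zero _
      have hpair : f (k - 1) + f k = 0 := by
        rw [← Finset.sum_pair hne, Finset.sum_subset hsub hz]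
        exact hkey
      have ha : f (k - 1) = fderiv ℝ L (t (k - 1), t k, x (k - 1), x k)
          ((0:ℝ), (0:ℝ), (0:E), v) := by
        simp [hf, hksub, hne]
      have hb : f k = fderiv ℝ L (t k, t (k + 1), x k, x (k + 1))
          ((0:ℝ), (0:ℝ), v, (0:E)) := by
        have : k + 1 ≠ k := by omega
        simp [hf, this]
      rw [ha, hb] at hpair
      exact hpair
    set G := gradient (fun y => Ld (t k) (t (k + 1)) y (x (k + 1))) (x k)
      + gradient (fun y => Ld (t (k - 1)) (t k) (x (k - 1)) y) (x k) with hG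
    have hGv : ∀ v : E, (inner ℝ G v : ℝ) = 0 := by
      intro v
      have e1 : (inner ℝ (gradient (fun y => Ld (t k) (t (k + 1)) y (x (k + 1))) (x k)) v : ℝ)
          = fderiv ℝ L (t k, t (k + 1), x k, x (k + 1)) ((0:ℝ), (0:ℝ), v, (0:E)) :=
        myAux_grad3 L hL (t k) (t (k + 1)) (x k) (x (k + 1)) v
      have e2 : (inner ℝ (gradient (fun y => Ld (t (k - 1)) (t k) (x (k - 1)) y) (x k)) v : ℝ)
          = fderiv ℝ L (t (k - 1), t k, x (k - 1), x k) ((0:ℝ), (0:ℝ), (0:E), v) :=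
        myAux_grad4 L hL (t (k - 1)) (t k) (x (k - 1)) (x k) v
      rw [hG, inner_add_left, e1, e2]
      linarith [hsp v]
    have := hGv G
    rwa [inner_self_eq_zero] at this
  · -- temporal
    have htp : fderiv ℝ L (t (k - 1), t k, x (k - 1), x k) ((0:ℝ), (1:ℝ), (0:E), (0:E))
        + fderiv ℝ L (t k, t (k + 1), x k, x (k + 1)) ((1:ℝ), (0:ℝ), (0:E), (0:E)) = 0 := by
      have hkey := key (fun j => if j = k then 1 else 0) (fun _ => 0)
        (by simp; omega) (by simp; omega) rfl rfl
      set f : ℕ → ℝ := fun j => fderiv ℝ L (t j, t (j + 1), x j, x (j + 1))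
        ((if j = k then (1:ℝ) else 0), (if j + 1 = k then (1:ℝ) else 0), (0:E), (0:E)) with hf
      have hz : ∀ j ∈ Finset.range N, j ∉ ({k - 1, k} : Finset ℕ) → f j = 0 := by
        intro j _ hj
        simp only [Finset.mem_insert, Finset.mem_singleton, not_or] at hj
        have e1 : j ≠ k := hj.2
        have e2 : j + 1 ≠ k := by omega
        simp [hf, e1, e2]
        exact map_zero _
      have hpair : f (k - 1) + f k = 0 := by
        rw [← Finset.sum_pair hne, Finset.sum_subset hsub hz]
        exact hkey
      have ha : f (k - 1) = fderiv ℝ L (t (k - 1), t k, x (k - 1), x k)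
          ((0:ℝ), (1:ℝ), (0:E), (0:E)) := by
        simp [hf, hksub, hne]
      have hb : f k = fderiv ℝ L (t k, t (k + 1), x k, x (k + 1))
          ((1:ℝ), (0:ℝ), (0:E), (0:E)) := by
        have : k + 1 ≠ k := by omega
        simp [hf, this]
      rw [ha, hb] at hpair
      exact hpair
    have e1 : deriv (fun s => Ld s (t (k + 1)) (x k) (x (k + 1))) (t k)
        = fderiv ℝ L (t k, t (k + 1), x k, x (k + 1)) ((1:ℝ), (0:ℝ), (0:E), (0:E)) :=
      myAux_d1 L hL (t k) (t (k + 1)) (x k) (x (k + 1))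
    have e2 : deriv (fun s => Ld (t (k - 1)) s (x (k - 1)) (x k)) (t k)
        = fderiv ℝ L (t (k - 1), t k, x (k - 1), x k) ((0:ℝ), (1:ℝ), (0:E), (0:E)) :=
      myAux_d2 L hL (t (k - 1)) (t k) (x (k - 1)) (x k)
    rw [e1, e2]
    linarith
end
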